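/- arXiv:math/0301015 — 3 statements merged into one kernel-verified Lean document; each statement's English description precedes it below -/
import Mathlib

section
/- Concentration Lemma: Let λ be a slope with |λ(m+n) - λ(m) - λ(n)| ≤ s for all m, n ∈ ℤ, where s ≥ 1. Define λ′(n) := λ(3sn) : 3s (optimal euclidean division by 3s). Then |λ′(m+n) - λ′(m) - λ′(n)| ≤ 1 for all m, n ∈ ℤ, and |λ′(n) - λ(n)| ≤ s for all n ∈ ℤ (so λ′ is a well adjusted slope equivalent to λ). -/
/-- `r` is the result of optimal euclidean division of `p` by `q > 0`:
the unique integer with `2p - q ≤ 2qr < 2p + q`. -/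
def OptDiv (p q r : ℤ) : Prop :=
  2 * p - q ≤ 2 * q * r ∧ 2 * q * r < 2 * p + q

/-!
Write `q = 3s`. Optimal division gives `|2q λ'(n) - 2λ(qn)| ≤ q`. Multiplying the defect of `λ'`
by `2q` therefore yields twice a defect of `λ` plus three rounding errors, of size at most
`2s + 3q = 11s < 2 · 2q`; divisibility by `2q` forces the defect of `λ'` into `{-1, 0, 1}`.
Likewise `2q (λ'(n) - λ(n))` is a rounding error plus `2(λ(qn) - qλ(n))`, and iterating the
defect bound gives `|λ(qn) - qλ(n)| ≤ (q - 1)s`, so `|2q (λ'(n) - λ(n))| ≤ 2qs + s < 2q(s + 1)`.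
-/

theorem OptDiv.abs_two_mul_sub_le {p q r : ℤ} (h : OptDiv p q r) : |2 * q * r - 2 * p| ≤ q :=
  abs_sub_le_iff.2 ⟨by linarith [h.2], by linarith [h.1]⟩

theorem Int.abs_le_of_abs_mul_lt {c x k : ℤ} (hc : 0 < c) (h : |c * x| < c * (k + 1)) :
    |x| ≤ k := by
  rw [abs_mul, abs_of_pos hc] at h
  exact Int.lt_add_one_iff.1 (lt_of_mul_lt_mul_left h hc.le)

theorem abs_apply_mul_sub_mul_le {l : ℤ → ℤ} {s : ℤ}
    (hdef : ∀ m n : ℤ, |l (m + n) - l m - l n| ≤ s) (n : ℤ) {k : ℤ} (hk : 1 ≤ k) :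
    |l (k * n) - k * l n| ≤ (k - 1) * s := by
  induction k, hk using Int.leInduction with
  | base => simp
  | succ k _ ih =>
    have hstep := hdef (k * n) n
    rw [← add_one_mul] at hstep
    calc |l ((k + 1) * n) - (k + 1) * l n|
        = |(l ((k + 1) * n) - l (k * n) - l n) + (l (k * n) - k * l n)| := by ring_nf
      _ ≤ s + (k - 1) * s := (abs_add_le _ _).trans (add_le_add hstep ih)
      _ = (k + 1 - 1) * s := by ring

/-- Concentration Lemma: if the defect of the slope `λ` is bounded by `s ≥ 1`
and `λ' n` is the optimal euclidean division of `λ (3sn)` by `3s`, then `λ'`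
has defect bounded by `1` and `|λ' n - λ n| ≤ s` for all `n`. -/
theorem concentration (l l' : ℤ → ℤ) (s : ℤ) (hs : 1 ≤ s)
    (hdef : ∀ m n : ℤ, |l (m + n) - l m - l n| ≤ s)
    (hl' : ∀ n : ℤ, OptDiv (l (3 * s * n)) (3 * s) (l' n)) :
    (∀ m n : ℤ, |l' (m + n) - l' m - l' n| ≤ 1) ∧
      ∀ n : ℤ, |l' n - l n| ≤ s := by
  have hq : 0 < 2 * (3 * s) := by omega
  refine ⟨fun m n => Int.abs_le_of_abs_mul_lt hq ?_, fun n => Int.abs_le_of_abs_mul_lt hq ?_⟩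
  · have hd := hdef (3 * s * m) (3 * s * n)
    rw [← mul_add] at hd
    have e₁ := (hl' (m + n)).abs_two_mul_sub_le
    have e₂ := (hl' m).abs_two_mul_sub_le
    have e₃ := (hl' n).abs_two_mul_sub_le
    rw [abs_le] at hd e₁ e₂ e₃
    rw [abs_lt]
    constructor <;> linarith
  · have hmul := abs_apply_mul_sub_mul_le hdef n (k := 3 * s) (by omega)
    have e := (hl' n).abs_two_mul_sub_le
    rw [abs_le] at hmul e
    rw [abs_lt]
    constructor <;> linarith
end

section
/- If λ is a slope taking infinitely many values, then there exist positive integers b and B such that |λ(n+k) - λ(n)| ≤ kb for all n ∈ ℤ, k ∈ ℕ, and |λ(n + kB) - λ(n)| ≥ k for all n ∈ ℤ, k ∈ ℕ. In particular λ takes each value at most 2B - 1 times. -/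
/-- A map `f : ℤ → ℤ` is a slope if its defects are bounded. -/
def IsSlope (f : ℤ → ℤ) : Prop :=
  ∃ S : ℤ, ∀ m n : ℤ, |f (m + n) - f m - f n| ≤ S

lemma slope_key (l : ℤ → ℤ) (S : ℤ) (hS : ∀ m n : ℤ, |l (m + n) - l m - l n| ≤ S)
    (B n : ℤ) : ∀ k : ℕ, |l (n + k * B) - l n - k * l B| ≤ k * S := by
  intro k
  induction k with
  | zero => simp
  | succ k ih =>
    have h1 := hS (n + k * B) B
    have harg : n + ((k : ℤ) + 1) * B = (n + k * B) + B := by ring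
    have key : l (n + ((k : ℕ) + 1 : ℕ) * B) - l n - ((k : ℕ) + 1 : ℕ) * l B
        = (l ((n + k * B) + B) - l (n + k * B) - l B)
          + (l (n + k * B) - l n - k * l B) := by
      push_cast
      rw [harg]; ring
    calc |l (n + ((k : ℕ) + 1 : ℕ) * B) - l n - ((k : ℕ) + 1 : ℕ) * l B|
        ≤ |l ((n + k * B) + B) - l (n + k * B) - l B|
          + |l (n + k * B) - l n - k * l B| := by rw [key]; exact abs_add_le _ _
      _ ≤ S + k * S := add_le_add h1 ih
      _ = ((k : ℕ) + 1 : ℕ) * S := by push_cast; ring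

/-- A slope taking infinitely many values grows at most and at least linearly,
and takes each value at most `2B - 1` times. -/
theorem slope_growth (l : ℤ → ℤ) (hl : IsSlope l)
    (hinf : (Set.range l).Infinite) :
    ∃ b B : ℕ, 0 < b ∧ 0 < B ∧
      (∀ n : ℤ, ∀ k : ℕ, |l (n + k) - l n| ≤ (k : ℤ) * b) ∧
      (∀ n : ℤ, ∀ k : ℕ, (k : ℤ) ≤ |l (n + k * B) - l n|) ∧
      ∀ v : ℤ, {n : ℤ | l n = v}.Finite ∧
        {n : ℤ | l n = v}.ncard ≤ 2 * B - 1 := by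
  obtain ⟨S, hS⟩ := hl
  have hS0 : 0 ≤ S := le_trans (abs_nonneg _) (hS 0 0)
  -- upper bound b
  set b : ℕ := (|l 1| + S).toNat + 1 with hb
  have hbpos : 0 < b := Nat.succ_pos _
  have hbge : |l 1| + S ≤ (b : ℤ) := by
    have := Int.self_le_toNat (|l 1| + S)
    push_cast [hb]; omega
  have hupper : ∀ n : ℤ, ∀ k : ℕ, |l (n + k) - l n| ≤ (k : ℤ) * b := by
    intro n k
    have h := slope_key l S hS 1 n k
    simp only [mul_one] at h
    have h2 : |l (n + k) - l n| ≤ |l (n + k) - l n - k * l 1| + |(k : ℤ) * l 1| := by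
      have := abs_add_le (l (n + k) - l n - k * l 1) ((k : ℤ) * l 1)
      simpa using this
    have h3 : |(k : ℤ) * l 1| = (k : ℤ) * |l 1| := by
      rw [abs_mul, abs_of_nonneg (by positivity : (0:ℤ) ≤ (k:ℤ))]
    have hk0 : (0:ℤ) ≤ (k:ℤ) := by positivity
    nlinarith [h, h2, h3, hbge]
  -- find B with |l B| ≥ S + 1
  have hbig : ∃ m : ℤ, 2 * S + |l 0| + 1 ≤ |l m| := by
    by_contra hcon
    push_neg at hcon
    apply hinf
    apply Set.Finite.subset (Set.finite_Icc (-(2 * S + |l 0| + 1)) (2 * S + |l 0| + 1))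
    rintro v ⟨m, rfl⟩
    have := (hcon m).le
    constructor <;> [skip; skip] <;>
      cases abs_le.mp this <;> simp_all <;> linarith [abs_le.mp this]
  obtain ⟨m, hm⟩ := hbig
  set B : ℕ := m.natAbs with hBdef
  have hBpos : 0 < B := by
    rcases Nat.eq_zero_or_pos B with h | h
    · exfalso
      have : m = 0 := Int.natAbs_eq_zero.mp h
      rw [this] at hm
      linarith [abs_nonneg (l 0)]
    · exact h
  have hlB : S + 1 ≤ |l (B : ℤ)| := by
    rcases le_or_gt 0 m with h | h
    · rw [show ((B : ℕ) : ℤ) = m from by simp [hBdef, Int.natAbs_of_nonneg h]]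
      linarith [abs_nonneg (l 0)]
    · have hcast : ((B : ℕ) : ℤ) = -m := by
        simp [hBdef, Int.ofNat_natAbs_of_nonpos h.le]
      rw [hcast]
      have h1 := hS m (-m)
      simp only [add_neg_cancel] at h1
      have h2 : |l m| ≤ |l 0 - l m - l (-m)| + |l 0| + |l (-m)| := by
        have t := abs_sub_abs_le_abs_sub (l m) (l 0 - l (-m))
        have t2 : |l 0 - l (-m)| ≤ |l 0| + |l (-m)| := abs_sub _ _
        have t3 : |l m - (l 0 - l (-m))| = |l 0 - l m - l (-m)| := by
          rw [abs_sub_comm]; ring_nf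
        linarith
      linarith
  have hlower : ∀ n : ℤ, ∀ k : ℕ, (k : ℤ) ≤ |l (n + k * B) - l n| := by
    intro n k
    have h := slope_key l S hS (B : ℤ) n k
    have h2 : |(k : ℤ) * l B| ≤ |l (n + k * B) - l n - k * l B| + |l (n + k * B) - l n| := by
      calc |(k : ℤ) * l B|
          = |(l (n + k * B) - l n) - (l (n + k * B) - l n - k * l B)| := by congr 1; ring
        _ ≤ |l (n + k * B) - l n| + |l (n + k * B) - l n - k * l B| := abs_sub _ _
        _ = |l (n + k * B) - l n - k * l B| + |l (n + k * B) - l n| := by ring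
    have h3 : |(k : ℤ) * l B| = (k : ℤ) * |l (B : ℤ)| := by
      rw [abs_mul, abs_of_nonneg (by positivity : (0:ℤ) ≤ (k:ℤ))]
    have hk0 : (0:ℤ) ≤ (k:ℤ) := by positivity
    nlinarith [h, h2, h3, hlB]
  refine ⟨b, B, hbpos, hBpos, hupper, hlower, ?_⟩
  intro v
  haveI : NeZero B := ⟨hBpos.ne'⟩
  have hinj : Set.InjOn (fun n : ℤ => (n : ZMod B)) {n : ℤ | l n = v} := by
    have main : ∀ p q : ℤ, l p = v → l q = v → p ≤ q → ((p : ZMod B) = (q : ZMod B)) → p = q := by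
      intro p q hp hq hpq hcast
      have hdvd : (B : ℤ) ∣ q - p :=
        Int.ModEq.dvd ((ZMod.intCast_eq_intCast_iff _ _ _).mp hcast)
      obtain ⟨c, hc⟩ := hdvd
      have hc0 : 0 ≤ c := by
        by_contra hneg
        push_neg at hneg
        have : q - p < 0 := by
          rw [hc]
          have : (0:ℤ) < B := by exact_mod_cast hBpos
          nlinarith
        omega
      set k : ℕ := c.toNat with hk
      have hck : (c : ℤ) = (k : ℤ) := by simp [hk, Int.toNat_of_nonneg hc0]
      have hq' : q = p + (k : ℤ) * B := by rw [← hck]; linear_combination hc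
      have hle := hlower p k
      rw [← hq', hq, hp, sub_self, abs_zero] at hle
      have hk0 : k = 0 := by omega
      rw [hk0] at hq'
      simpa using hq'.symm
    intro p hp q hq hcast
    rcases le_total p q with h | h
    · exact main p q hp hq h hcast
    · exact (main q p hq hp h hcast.symm).symm
  have hfin : {n : ℤ | l n = v}.Finite := by
    have : ((fun n : ℤ => (n : ZMod B)) '' {n : ℤ | l n = v}).Finite := Set.toFinite _
    exact Set.Finite.of_finite_image this hinj
  refine ⟨hfin, ?_⟩
  have h1 : {n : ℤ | l n = v}.ncard = ((fun n : ℤ => (n : ZMod B)) '' {n : ℤ | l n = v}).ncard :=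
    (Set.ncard_image_of_injOn hinj).symm
  have h2 : ((fun n : ℤ => (n : ZMod B)) '' {n : ℤ | l n = v}).ncard ≤ (Set.univ : Set (ZMod B)).ncard :=
    Set.ncard_le_ncard (Set.subset_univ _) Set.finite_univ
  have h3 : (Set.univ : Set (ZMod B)).ncard = B := by
    rw [Set.ncard_univ, Nat.card_eq_fintype_card, ZMod.card]
  omega
end

section
/- Nonzero elements have multiplicative inverses: let α be a well adjusted slope representing a nonzero real number (i.e., α takes infinitely many values). Choose for each v ∈ ℤ an integer n_v with |v - α(n_v)| ≤ |α(1)| + 1, and set β(v) := n_v. Then β is a slope and α ∘ β is equivalent to the identity slope. -/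
/-- A slope `λ : ℤ → ℤ` is well adjusted if it is odd and its defect lies in
`{-1, 0, 1}`. -/
def WellAdjusted (l : ℤ → ℤ) : Prop :=
  (∀ n : ℤ, l (-n) = -l n) ∧
    ∀ m n : ℤ, -1 ≤ l (m + n) - l m - l n ∧ l (m + n) - l m - l n ≤ 1

lemma wa_zero {l : ℤ → ℤ} (h : WellAdjusted l) : l 0 = 0 := by
  have := h.1 0
  simp at this
  omega

lemma wa_neg {l : ℤ → ℤ} (h : WellAdjusted l) : WellAdjusted (fun n => -l n) := by
  refine ⟨fun n => by simp [h.1 n], fun m n => ?_⟩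
  have := h.2 m n
  dsimp only
  omega

lemma wa_rep {l : ℤ → ℤ} (h : WellAdjusted l) (n : ℤ) :
    ∀ p : ℤ, 1 ≤ p → p * l n - (p - 1) ≤ l (p * n) := by
  have hnat : ∀ q : ℕ, ((q : ℤ) + 1) * l n - q ≤ l (((q : ℤ) + 1) * n) := by
    intro q
    induction q with
    | zero => simp
    | succ q ih =>
      have h2 := (h.2 (((q : ℤ) + 1) * n) n).1
      push_cast
      have he : ((q : ℤ) + 1 + 1) * n = ((q : ℤ) + 1) * n + n := by ring
      rw [he]
      nlinarith
  intro p hp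
  have hq : ((p - 1).toNat : ℤ) = p - 1 := Int.toNat_of_nonneg (by omega)
  have := hnat (p - 1).toNat
  rw [hq] at this
  have hpp : p - 1 + 1 = p := by ring
  rw [hpp] at this
  linarith

/-- Growth lemma: if a well adjusted slope exceeds `K + 2` at some positive
point, it eventually stays above `K`. -/
lemma wa_growth {l : ℤ → ℤ} (h : WellAdjusted l) {n₀ K : ℤ} (hpos : 0 < n₀)
    (hK : 0 ≤ K) (hval : K + 2 ≤ l n₀) :
    ∃ M : ℤ, 0 < M ∧ ∀ d : ℤ, M ≤ d → K < l d := by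
  have hne : (Finset.Ico (0 : ℤ) n₀).Nonempty := ⟨0, by simp [hpos]⟩
  set R : ℤ := (Finset.Ico (0 : ℤ) n₀).sup' hne (fun r => |l r|) with hR
  have hR0 : 0 ≤ R := by
    have := Finset.le_sup' (fun r => |l r|) (Finset.mem_Ico.mpr ⟨le_refl (0:ℤ), hpos⟩)
    have := abs_nonneg (l 0)
    omega
  refine ⟨(R + 2) * n₀, by positivity, fun d hd => ?_⟩
  set p : ℤ := d / n₀ with hp
  set r : ℤ := d % n₀ with hr
  have hdiv : n₀ * p + r = d := Int.mul_ediv_add_emod d n₀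
  have hr0 : 0 ≤ r := Int.emod_nonneg d (by omega)
  have hrlt : r < n₀ := Int.emod_lt_of_pos d hpos
  have hpge : R + 2 ≤ p := by
    rw [hp, Int.le_ediv_iff_mul_le hpos]
    exact hd
  have hlr : -R ≤ l r := by
    have := Finset.le_sup' (fun r' => |l r'|) (Finset.mem_Ico.mpr ⟨hr0, hrlt⟩)
    have := abs_le.mp (le_refl |l r|)
    omega
  have hrep := wa_rep h n₀ p (by omega)
  have hdef := (h.2 (p * n₀) r).1
  have heq : p * n₀ + r = d := by rw [mul_comm]; exact hdiv
  rw [heq] at hdef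
  have e1 : p * (K + 2) ≤ p * l n₀ := mul_le_mul_of_nonneg_left hval (by omega)
  have e2 : (R + 2) * (K + 1) ≤ p * (K + 1) := mul_le_mul_of_nonneg_right hpge (by omega)
  nlinarith [mul_nonneg hR0 hK, e1, e2, hrep, hdef, hlr]

/-- A well adjusted slope with infinite range is eventually large in absolute
value. -/
lemma wa_unbounded {l : ℤ → ℤ} (h : WellAdjusted l) (hinf : (Set.range l).Infinite)
    (K : ℤ) (hK : 0 ≤ K) : ∃ M : ℤ, ∀ d : ℤ, |l d| ≤ K → |d| ≤ M := by
  -- find n₀ > 0 with |l n₀| ≥ K + 2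
  obtain ⟨n₀, hn₀pos, hn₀⟩ : ∃ n₀ : ℤ, 0 < n₀ ∧ K + 2 ≤ |l n₀| := by
    by_contra hcon
    push_neg at hcon
    apply hinf
    apply Set.Finite.subset (Set.finite_Icc (-(K + 1)) (K + 1))
    rintro x ⟨n, rfl⟩
    simp only [Set.mem_Icc]
    rcases lt_trichotomy n 0 with hn | hn | hn
    · have h1 := hcon (-n) (by omega)
      have h3 := h.1 (-n)
      simp only [neg_neg] at h3
      rw [h3]
      rw [abs_lt] at h1
      omega
    · rw [hn, wa_zero h]; omega
    · have h1 := hcon n hn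
      rw [abs_lt] at h1
      omega
  -- reduce to the case l n₀ ≥ K + 2, possibly replacing l by -l
  have key : ∃ M : ℤ, 0 < M ∧ ∀ d : ℤ, M ≤ d → K < |l d| := by
    rcases le_or_gt (K + 2) (l n₀) with hcase | hcase
    · obtain ⟨M, hM, hMd⟩ := wa_growth h hn₀pos hK hcase
      exact ⟨M, hM, fun d hd => lt_of_lt_of_le (hMd d hd) (le_abs_self _)⟩
    · have hcase' : K + 2 ≤ -l n₀ := by
        rcases abs_cases (l n₀) with ⟨he, h0⟩ | ⟨he, h0⟩ <;> omega
      obtain ⟨M, hM, hMd⟩ := wa_growth (wa_neg h) hn₀pos hK hcase'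
      refine ⟨M, hM, fun d hd => ?_⟩
      have := hMd d hd
      have := neg_le_abs (l d)
      omega
  obtain ⟨M, hM0, hM⟩ := key
  refine ⟨M, fun d hd => ?_⟩
  by_contra hcon
  push_neg at hcon
  rcases le_or_gt 0 d with h1 | h1
  · have h2 : M ≤ d := by rw [abs_of_nonneg h1] at hcon; omega
    have := hM d h2
    omega
  · have h2 : M ≤ -d := by rw [abs_of_neg h1] at hcon; omega
    have h3 := hM (-d) h2
    rw [h.1 d, abs_neg] at h3
    omega

/-- Existence of multiplicative inverses: if `α` is a well adjusted slope
taking infinitely many values and `β v = n_v` with `|v - α n_v| ≤ |α 1| + 1`,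
then `β` is a slope and `α ∘ β` is equivalent to the identity. -/
theorem right_inverse_slope (α β : ℤ → ℤ) (hα : WellAdjusted α)
    (hinf : (Set.range α).Infinite)
    (hβ : ∀ v : ℤ, |v - α (β v)| ≤ |α 1| + 1) :
    IsSlope β ∧ ∃ C : ℤ, ∀ v : ℤ, |(α ∘ β) v - v| ≤ C := by
  set K : ℤ := 3 * (|α 1| + 1) + 2 with hK
  have hK0 : 0 ≤ K := by positivity
  obtain ⟨M, hM⟩ := wa_unbounded hα hinf K hK0
  constructor
  · refine ⟨M, fun m n => ?_⟩
    set d : ℤ := β (m + n) - β m - β n with hd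
    apply hM
    -- |α d| ≤ K
    have h1 := hα.2 (d + β m) (β n)
    have h2 := hα.2 d (β m)
    have he : d + β m + β n = β (m + n) := by omega
    rw [he] at h1
    have b1 := abs_le.mp (hβ (m + n))
    have b2 := abs_le.mp (hβ m)
    have b3 := abs_le.mp (hβ n)
    rw [abs_le]
    omega
  · refine ⟨|α 1| + 1, fun v => ?_⟩
    have := hβ v
    simp only [Function.comp_apply]
    rw [abs_sub_comm]
    exact this
end
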